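/- arXiv:1612.02369 — 4 statements merged into one kernel-verified Lean document; each statement's English description precedes it below -/
import Mathlib

section
/- Let E be a convex (or more generally star-shaped) polygon in the plane with diameter at most h, and let d be a C² function on a neighborhood of E that vanishes at all vertices of E. If for every point x in the interior of E there is a straight segment through x with endpoints on ∂E contained in E, then |d(x)| ≤ (h²/4)·|d|_{C²(E)} for all x ∈ E, where |d|_{C²(E)} denotes the supremum of the second derivatives of d on E. -/
/-!
On a segment `[p, q] ⊆ E` the restriction `g t = d (p + t • (q - p))` satisfies
`|g''| ≤ M h²`, so `±g - (M h² / 2) t (1 - t)` is convex and `|g|` exceeds the larger of its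
endpoint values by at most `M h² / 8`. On an edge both endpoints are vertices, which bounds `d`
on `∂E` by `M h² / 8`; on a chord through an interior point both endpoints lie on `∂E`, which
gives `M h² / 4`.
-/

open Set

theorem le_max_add_of_neg_le_deriv2 {f f' f'' : ℝ → ℝ} {K : ℝ}
    (hf : ∀ t ∈ Icc (0 : ℝ) 1, HasDerivAt f (f' t) t)
    (hf' : ∀ t ∈ Icc (0 : ℝ) 1, HasDerivAt f' (f'' t) t)
    (hK : ∀ t ∈ Icc (0 : ℝ) 1, -K ≤ f'' t) :
    ∀ t ∈ Icc (0 : ℝ) 1, f t ≤ max (f 0) (f 1) + K / 2 * (t * (1 - t)) := by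
  have hφ : ∀ s ∈ Icc (0 : ℝ) 1, HasDerivAt (fun s ↦ f s - K / 2 * (s * (1 - s)))
      (f' s - K / 2 * (1 - 2 * s)) s := fun s hs ↦
    (hf s hs).sub <| (((hasDerivAt_id' s).mul ((hasDerivAt_id' s).const_sub 1)).const_mul
      (K / 2)).congr_deriv (by ring)
  have hφ' : ∀ s ∈ Icc (0 : ℝ) 1, HasDerivAt (fun s ↦ f' s - K / 2 * (1 - 2 * s))
      (f'' s + K) s := fun s hs ↦
    ((hf' s hs).sub <| (((hasDerivAt_id' s).const_mul 2).const_sub 1).const_mul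
      (K / 2)).congr_deriv (by ring)
  have hconv : ConvexOn ℝ (Icc 0 1) (fun s ↦ f s - K / 2 * (s * (1 - s))) :=
    convexOn_of_hasDerivWithinAt2_nonneg (convex_Icc 0 1)
      (fun s hs ↦ (hφ s hs).continuousAt.continuousWithinAt)
      (fun s hs ↦ (hφ s (interior_subset hs)).hasDerivWithinAt)
      (fun s hs ↦ (hφ' s (interior_subset hs)).hasDerivWithinAt)
      (fun s hs ↦ by linarith [hK s (interior_subset hs)])
  intro t ht
  have := hconv.le_on_segment (left_mem_Icc.2 zero_le_one) (right_mem_Icc.2 zero_le_one)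
    (by rwa [segment_eq_Icc zero_le_one])
  simp only [mul_zero, sub_zero, sub_self, zero_mul] at this
  linarith

theorem abs_le_max_abs_add_of_abs_deriv2_le {f f' f'' : ℝ → ℝ} {K : ℝ}
    (hf : ∀ t ∈ Icc (0 : ℝ) 1, HasDerivAt f (f' t) t)
    (hf' : ∀ t ∈ Icc (0 : ℝ) 1, HasDerivAt f' (f'' t) t)
    (hK : ∀ t ∈ Icc (0 : ℝ) 1, |f'' t| ≤ K) :
    ∀ t ∈ Icc (0 : ℝ) 1, |f t| ≤ max |f 0| |f 1| + K / 8 := by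
  intro t ht
  have hK0 : 0 ≤ K := (abs_nonneg _).trans (hK 0 (left_mem_Icc.2 zero_le_one))
  have hquarter : K / 2 * (t * (1 - t)) ≤ K / 8 := by nlinarith [sq_nonneg (2 * t - 1)]
  have hupper := le_max_add_of_neg_le_deriv2 hf hf' (fun s hs ↦ (abs_le.1 (hK s hs)).1) t ht
  have hlower := le_max_add_of_neg_le_deriv2 (f := -f) (fun s hs ↦ (hf s hs).neg)
    (fun s hs ↦ (hf' s hs).neg) (fun s hs ↦ neg_le_neg (abs_le.1 (hK s hs)).2) t ht
  have hmax : max (f 0) (f 1) ≤ max |f 0| |f 1| := max_le_max (le_abs_self _) (le_abs_self _)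
  have hmax' : max (-f 0) (-f 1) ≤ max |f 0| |f 1| := max_le_max (neg_le_abs _) (neg_le_abs _)
  simp only [Pi.neg_apply] at hlower
  exact abs_le'.2 ⟨by linarith, by linarith⟩

theorem norm_fderiv_fderiv_apply_le {𝕜 E F : Type*} [NontriviallyNormedField 𝕜]
    [NormedAddCommGroup E] [NormedSpace 𝕜 E] [NormedAddCommGroup F] [NormedSpace 𝕜 F]
    (f : E → F) (x v : E) :
    ‖fderiv 𝕜 (fderiv 𝕜 f) x v v‖ ≤ ‖iteratedFDeriv 𝕜 2 f x‖ * ‖v‖ ^ 2 := by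
  have := (iteratedFDeriv 𝕜 2 f x).le_opNorm ![v, v]
  rw [iteratedFDeriv_two_apply] at this
  simpa [Fin.prod_univ_two, sq] using this

theorem abs_le_max_abs_add_of_norm_iteratedFDeriv_two_le {F : Type*} [NormedAddCommGroup F]
    [NormedSpace ℝ F] {d : F → ℝ} {p q : F} {M : ℝ}
    (hd : ∀ x ∈ segment ℝ p q, ContDiffAt ℝ 2 d x)
    (hM : ∀ x ∈ segment ℝ p q, ‖iteratedFDeriv ℝ 2 d x‖ ≤ M) :
    ∀ x ∈ segment ℝ p q, |d x| ≤ max |d p| |d q| + M * ‖q - p‖ ^ 2 / 8 := by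
  set v := q - p
  set γ : ℝ → F := fun t ↦ p + t • v
  have hγ : ∀ t ∈ Icc (0 : ℝ) 1, γ t ∈ segment ℝ p q := fun t ht ↦ by
    rw [segment_eq_image']; exact ⟨t, ht, rfl⟩
  have hγ' : ∀ t : ℝ, HasDerivAt γ v t := fun t ↦
    (((hasDerivAt_id t).smul_const v).const_add p).congr_deriv (one_smul _ _)
  have h1 : ∀ t ∈ Icc (0 : ℝ) 1, HasDerivAt (fun t ↦ d (γ t)) (fderiv ℝ d (γ t) v) t :=
    fun t ht ↦
      ((hd _ (hγ t ht)).differentiableAt two_ne_zero).hasFDerivAt.comp_hasDerivAt t (hγ' t)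
  have h2 : ∀ t ∈ Icc (0 : ℝ) 1, HasDerivAt (fun t ↦ fderiv ℝ d (γ t) v)
      (fderiv ℝ (fderiv ℝ d) (γ t) v v) t := fun t ht ↦ by
    have hD : DifferentiableAt ℝ (fderiv ℝ d) (γ t) :=
      ((hd _ (hγ t ht)).fderiv_right (m := 1) le_rfl).differentiableAt one_ne_zero
    simpa using (hD.hasFDerivAt.comp_hasDerivAt t (hγ' t)).clm_apply (hasDerivAt_const t v)
  have h3 : ∀ t ∈ Icc (0 : ℝ) 1, |fderiv ℝ (fderiv ℝ d) (γ t) v v| ≤ M * ‖v‖ ^ 2 :=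
    fun t ht ↦ (norm_fderiv_fderiv_apply_le d (γ t) v).trans <| by gcongr; exact hM _ (hγ t ht)
  intro x hx
  rw [segment_eq_image'] at hx
  obtain ⟨t, ht, rfl⟩ := hx
  simpa [γ, v] using abs_le_max_abs_add_of_abs_deriv2_le h1 h2 h3 t ht

theorem polygon_distance_bound_general
    (V : Finset (EuclideanSpace ℝ (Fin 2))) (E : Set (EuclideanSpace ℝ (Fin 2)))
    (hE : E = convexHull ℝ (V : Set (EuclideanSpace ℝ (Fin 2))))
    (h M : ℝ)
    (hdiam : Metric.diam E ≤ h)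
    (d : EuclideanSpace ℝ (Fin 2) → ℝ)
    (U : Set (EuclideanSpace ℝ (Fin 2))) (hU : IsOpen U) (hEU : E ⊆ U)
    (hd : ContDiffOn ℝ 2 d U)
    (hvanish : ∀ v ∈ V, d v = 0)
    (hedges : ∀ x ∈ frontier E, ∃ p ∈ V, ∃ q ∈ V,
      x ∈ segment ℝ p q ∧ segment ℝ p q ⊆ frontier E)
    (hchord : ∀ x ∈ interior E, ∃ p q, p ∈ frontier E ∧ q ∈ frontier E ∧
      x ∈ segment ℝ p q ∧ segment ℝ p q ⊆ E)
    (hM : ∀ x ∈ E, ‖iteratedFDeriv ℝ 2 d x‖ ≤ M) :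
    ∀ x ∈ E, |d x| ≤ h ^ 2 / 4 * M := by
  intro x hx
  have hM0 : 0 ≤ M := (norm_nonneg _).trans (hM x hx)
  have hcompact : IsCompact E := hE ▸ V.finite_toSet.isCompact_convexHull ℝ
  have hchord_bound : ∀ p q, segment ℝ p q ⊆ E →
      ∀ y ∈ segment ℝ p q, |d y| ≤ max |d p| |d q| + M * h ^ 2 / 8 := by
    intro p q hpq y hy
    have hlen : ‖q - p‖ ≤ h := (dist_eq_norm q p ▸ Metric.dist_le_diam_of_mem hcompact.isBounded
      (hpq (right_mem_segment ℝ p q)) (hpq (left_mem_segment ℝ p q))).trans hdiam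
    calc |d y| ≤ max |d p| |d q| + M * ‖q - p‖ ^ 2 / 8 :=
          abs_le_max_abs_add_of_norm_iteratedFDeriv_two_le
            (fun z hz ↦ hd.contDiffAt (hU.mem_nhds (hEU (hpq hz))))
            (fun z hz ↦ hM z (hpq hz)) y hy
      _ ≤ max |d p| |d q| + M * h ^ 2 / 8 := by gcongr
  have hfrontier : ∀ y ∈ frontier E, |d y| ≤ M * h ^ 2 / 8 := by
    intro y hy
    obtain ⟨p, hp, q, hq, hypq, hpq⟩ := hedges y hy
    simpa [hvanish p hp, hvanish q hq] using
      hchord_bound p q (hpq.trans hcompact.isClosed.frontier_subset) y hypq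
  rcases (closure_eq_interior_union_frontier E ▸ subset_closure hx) with hxi | hxf
  · obtain ⟨p, q, hp, hq, hxpq, hpq⟩ := hchord x hxi
    have := hchord_bound p q hpq x hxpq
    linarith [max_le (hfrontier p hp) (hfrontier q hq)]
  · linarith [hfrontier x hxf, mul_nonneg (sq_nonneg h) hM0]

/-- Two-dimensional content of Lemma 5.3: if `E` is a convex polygon (the convex hull
of its finite vertex set `V`) of diameter at most `h`, `d` is `C²` on a neighborhood
of `E` and vanishes at all vertices, every boundary point lies on an edge (a segment
between two vertices contained in the boundary), and through every interior point
there is a chord with endpoints on the boundary contained in `E`, then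
`|d x| ≤ (h²/4)·|d|_{C²(E)}` on `E`, where `|d|_{C²(E)}` is the sup of the second
derivatives of `d` on `E`. -/
theorem polygon_distance_bound
    (V : Finset (EuclideanSpace ℝ (Fin 2))) (E : Set (EuclideanSpace ℝ (Fin 2)))
    (hE : E = convexHull ℝ (V : Set (EuclideanSpace ℝ (Fin 2))))
    (h M : ℝ) (hh : 0 < h) (hM0 : 0 ≤ M)
    (hdiam : Metric.diam E ≤ h)
    (d : EuclideanSpace ℝ (Fin 2) → ℝ)
    (U : Set (EuclideanSpace ℝ (Fin 2))) (hU : IsOpen U) (hEU : E ⊆ U)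
    (hd : ContDiffOn ℝ 2 d U)
    (hvanish : ∀ v ∈ V, d v = 0)
    (hedges : ∀ x ∈ frontier E, ∃ p ∈ V, ∃ q ∈ V,
      x ∈ segment ℝ p q ∧ segment ℝ p q ⊆ frontier E)
    (hchord : ∀ x ∈ interior E, ∃ p q, p ∈ frontier E ∧ q ∈ frontier E ∧
      x ∈ segment ℝ p q ∧ segment ℝ p q ⊆ E)
    (hM : ∀ x ∈ E, ‖iteratedFDeriv ℝ 2 d x‖ ≤ M) :
    ∀ x ∈ E, |d x| ≤ h ^ 2 / 4 * M :=
  polygon_distance_bound_general V E hE h M hdiam d U hU hEU hd hvanish hedges hchord hM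
end

section
/- Let Γ be a C² surface with polygonal approximation Γ_h satisfying the geometric estimates ‖1−δ_h‖_{L^∞(Γ_h)} ≤ C h². Then for all v, w ∈ L²(Γ_h) with lifts v^ℓ, w^ℓ ∈ L²(Γ): |∫_Γ v^ℓ w^ℓ dA − ∫_{Γ_h} v w dA_h| ≤ C h² ‖v^ℓ‖_{L²(Γ)} ‖w^ℓ‖_{L²(Γ)}. -/
/-!
Transporting `∫_{Γh} v w dA_h` to `Γ` turns it into `∫_Γ v^ℓ w^ℓ δ_h⁻¹ dA`, so the error is
`∫_Γ v^ℓ w^ℓ (1 - δ_h⁻¹) dA`. Once `C h² ≤ 1/2` we have `|1 - δ_h⁻¹| ≤ 2 C h²`, and Cauchy–Schwarz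
finishes. The change-of-variables hypothesis is used on arbitrary functions, so the transported
integrand `(v w / δ_h) ∘ a⁻¹` need not be measurable; in that case its integral is the junk value
`0`, which forces `v w = 0` almost everywhere on `Γh`.
-/

open MeasureTheory

theorem integral_abs_mul_le_sqrt_mul_sqrt {α : Type*} [MeasurableSpace α] {μ : Measure α}
    {f g : α → ℝ} (hf : MemLp f 2 μ) (hg : MemLp g 2 μ) :
    ∫ x, |f x * g x| ∂μ ≤ √(∫ x, f x ^ 2 ∂μ) * √(∫ x, g x ^ 2 ∂μ) := by
  have hsq : ∀ t : ℝ, |t| ^ (2 : ℝ) = t ^ 2 := fun t => by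
    rw [Real.rpow_two, sq_abs]
  have key := integral_mul_le_Lp_mul_Lq_of_nonneg Real.HolderConjugate.two_two
    (Filter.Eventually.of_forall fun x => abs_nonneg (f x))
    (Filter.Eventually.of_forall fun x => abs_nonneg (g x))
    (by rw [ENNReal.ofReal_ofNat]; exact hf.abs) (by rw [ENNReal.ofReal_ofNat]; exact hg.abs)
  simp only [hsq, ← abs_mul] at key
  simpa only [Real.sqrt_eq_rpow, one_div] using key

theorem abs_sub_div_le_of_abs_one_sub_le {p d c : ℝ} (hd : |1 - d| ≤ c) (hc : c ≤ 1 / 2) :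
    |p - p / d| ≤ 2 * c * |p| := by
  have hd0 : 1 / 2 ≤ d := by linarith [(abs_le.1 hd).2]
  have hsplit : p - p / d = p * ((d - 1) / d) := by field_simp
  rw [hsplit, abs_mul, abs_div, abs_of_pos (by linarith : 0 < d), abs_sub_comm, mul_comm]
  gcongr
  rw [div_le_iff₀ (by linarith)]
  nlinarith [abs_nonneg (1 - d)]

section ChangeOfVariables

variable {X Y : Type*} [MeasurableSpace X] [MeasurableSpace Y] {ν : Measure X} {μ : Measure Y}
  {e : X ≃ Y} {δ : X → ℝ}

theorem integral_eq_integral_div_comp_symm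
    (hcov : ∀ g : Y → ℝ, ∫ y, g y ∂μ = ∫ x, g (e x) * δ x ∂ν) (hδ : ∀ x, δ x ≠ 0) (f : X → ℝ) :
    ∫ x, f x ∂ν = ∫ y, f (e.symm y) / δ (e.symm y) ∂μ := by
  simp [hcov, div_mul_cancel₀ _ (hδ _)]

theorem ae_eq_zero_of_nonneg_of_not_aestronglyMeasurable
    (hcov : ∀ g : Y → ℝ, ∫ y, g y ∂μ = ∫ x, g (e x) * δ x ∂ν) (hδ : ∀ x, δ x ≠ 0)
    {f : X → ℝ} (hf0 : 0 ≤ f) (hf : Integrable f ν)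
    (hm : ¬ AEStronglyMeasurable (fun y => f (e.symm y) / δ (e.symm y)) μ) :
    f =ᵐ[ν] 0 := by
  refine (integral_eq_zero_iff_of_nonneg hf0 hf).1 ?_
  rw [integral_eq_integral_div_comp_symm hcov hδ, integral_undef fun h => hm h.1]

theorem ae_eq_zero_of_not_aestronglyMeasurable
    (hcov : ∀ g : Y → ℝ, ∫ y, g y ∂μ = ∫ x, g (e x) * δ x ∂ν) (hδ : ∀ x, 0 < δ x)
    {u : X → ℝ} (hu : Integrable u ν)
    (hm : ¬ AEStronglyMeasurable (fun y => u (e.symm y) / δ (e.symm y)) μ) :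
    u =ᵐ[ν] 0 := by
  set q : Y → ℝ := fun y => u (e.symm y) / δ (e.symm y)
  have hδ' : ∀ x, δ x ≠ 0 := fun x => (hδ x).ne'
  have htransport : ∀ s : ℝ, (fun y => (|u (e.symm y)| + s * u (e.symm y)) / δ (e.symm y)) =
      fun y => |q y| + s * q y := fun s => by
    funext y
    simp only [q, abs_div, abs_of_pos (hδ _)]
    ring
  by_cases habs : AEStronglyMeasurable (fun y => |q y|) μ
  · -- `q = (|q| + q)/2 - (|q| - q)/2`, so neither `|q| + q` nor `|q| - q` is measurable.
    have hvanish : ∀ s : ℝ, |s| ≤ 1 → s ≠ 0 → (fun x => |u x| + s * u x) =ᵐ[ν] 0 :=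
      fun s hs1 hs0 => by
        refine ae_eq_zero_of_nonneg_of_not_aestronglyMeasurable hcov hδ' (fun x => ?_)
          (hu.abs.add (hu.const_mul s)) ?_
        · have : |s * u x| ≤ |u x| := by
            rw [abs_mul]; exact mul_le_of_le_one_left (abs_nonneg _) hs1
          simp only [Pi.zero_apply]
          linarith [neg_abs_le (s * u x)]
        · rw [htransport]
          refine fun h => hm ((h.sub habs).const_mul s⁻¹ |>.congr ?_)
          filter_upwards with y
          simp only [Pi.sub_apply]
          field_simp
          ring
    filter_upwards [hvanish 1 (by simp) one_ne_zero, hvanish (-1) (by simp) (by norm_num)]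
      with x hplus hminus
    simp only [Pi.zero_apply] at hplus hminus ⊢
    linarith
  · have h := ae_eq_zero_of_nonneg_of_not_aestronglyMeasurable hcov hδ' (f := fun x => |u x|)
      (fun x => abs_nonneg _) hu.abs (by simpa [q, abs_div, abs_of_pos (hδ _)] using habs)
    filter_upwards [h] with x hx
    simpa using hx

theorem abs_integral_comp_symm_sub_integral_le
    (hcov : ∀ g : Y → ℝ, ∫ y, g y ∂μ = ∫ x, g (e x) * δ x ∂ν) {c : ℝ}
    (hδ : ∀ x, |1 - δ x| ≤ c) (hc0 : 0 ≤ c) (hc : c ≤ 1 / 2) {u : X → ℝ} (hu : Integrable u ν)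
    (hul : Integrable (fun y => u (e.symm y)) μ) :
    |∫ y, u (e.symm y) ∂μ - ∫ x, u x ∂ν| ≤ 2 * c * ∫ y, |u (e.symm y)| ∂μ := by
  have hδpos : ∀ x, 0 < δ x := fun x => by linarith [(abs_le.1 (hδ x)).2]
  have hpointwise : ∀ y, |u (e.symm y) - u (e.symm y) / δ (e.symm y)| ≤
      2 * c * |u (e.symm y)| := fun y => abs_sub_div_le_of_abs_one_sub_le (hδ _) hc
  by_cases hm : AEStronglyMeasurable (fun y => u (e.symm y) / δ (e.symm y)) μ
  · have hq : Integrable (fun y => u (e.symm y) / δ (e.symm y)) μ := by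
      refine (hul.abs.const_mul 2).mono' hm (.of_forall fun y => ?_)
      have := abs_sub_abs_le_abs_sub (u (e.symm y) / δ (e.symm y)) (u (e.symm y))
      rw [abs_sub_comm] at this
      rw [Real.norm_eq_abs]
      nlinarith [hpointwise y, abs_nonneg (u (e.symm y))]
    rw [integral_eq_integral_div_comp_symm hcov (fun x => (hδpos x).ne'),
      ← integral_sub hul hq, ← integral_const_mul]
    exact abs_integral_le_integral_abs.trans
      (integral_mono (hul.sub hq).abs (hul.abs.const_mul _) hpointwise)
  · have hzero := ae_eq_zero_of_not_aestronglyMeasurable hcov hδpos hu hm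
    have hlift : ∫ y, u (e.symm y) ∂μ = 0 := by
      rw [hcov]
      refine integral_eq_zero_of_ae ?_
      filter_upwards [hzero] with x hx
      simp [hx]
    rw [hlift, integral_eq_zero_of_ae hzero, sub_zero, abs_zero]
    positivity

end ChangeOfVariables

/-- L² geometric consistency estimate (5.11) of Lemma 5.5: if the area quotient
`δ_h` (from `dA = δ_h dA_h` under the normal projection `a : Γh ≃ Γ`) satisfies
`‖1 − δ_h‖_∞ ≤ C h²`, then for `h` small there is `C' > 0` such that for all
`v, w ∈ L²(Γh)` with lifts `v^ℓ = v ∘ a⁻¹, w^ℓ = w ∘ a⁻¹`,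
`|∫_Γ v^ℓ w^ℓ dA − ∫_{Γh} v w dA_h| ≤ C' h² ‖v^ℓ‖_{L²(Γ)} ‖w^ℓ‖_{L²(Γ)}`. -/
theorem geometric_L2_consistency
    {Γ : Type*} [MeasurableSpace Γ] (μ : Measure Γ) (C : ℝ) (hC : 0 < C) :
    ∃ h₀ > (0:ℝ), ∃ C' > (0:ℝ), ∀ h : ℝ, 0 < h → h < h₀ →
      ∀ (Γh : Type) [MeasurableSpace Γh], ∀ (μh : Measure Γh) (a : Γh ≃ Γ)
        (δh : Γh → ℝ),
      (∀ x, |1 - δh x| ≤ C * h ^ 2) →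
      -- change of variables between the surface measures
      (∀ g : Γ → ℝ, ∫ y, g y ∂μ = ∫ x, g (a x) * δh x ∂μh) →
      ∀ v w : Γh → ℝ,
        MemLp (fun y => v (a.symm y)) 2 μ → MemLp (fun y => w (a.symm y)) 2 μ →
        MemLp v 2 μh → MemLp w 2 μh →
        |(∫ y, v (a.symm y) * w (a.symm y) ∂μ) - ∫ x, v x * w x ∂μh| ≤
          C' * h ^ 2 * Real.sqrt (∫ y, (v (a.symm y)) ^ 2 ∂μ) *
            Real.sqrt (∫ y, (w (a.symm y)) ^ 2 ∂μ) := by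
  refine ⟨√(1 / (2 * C)), by positivity, 2 * C, by positivity, ?_⟩
  intro h hh0 hh Γh _ μh a δh hδ hcov v w hvl hwl hv hw
  have hsmall : C * h ^ 2 ≤ 1 / 2 := by
    have := (Real.lt_sqrt hh0.le).1 hh
    rw [lt_div_iff₀ (by positivity)] at this
    linarith
  calc |(∫ y, v (a.symm y) * w (a.symm y) ∂μ) - ∫ x, v x * w x ∂μh|
      ≤ 2 * (C * h ^ 2) * ∫ y, |v (a.symm y) * w (a.symm y)| ∂μ :=
        abs_integral_comp_symm_sub_integral_le (u := v * w) hcov hδ (by positivity) hsmall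
          (hv.integrable_mul hw) (hvl.integrable_mul hwl)
    _ ≤ 2 * (C * h ^ 2) * (√(∫ y, v (a.symm y) ^ 2 ∂μ) * √(∫ y, w (a.symm y) ^ 2 ∂μ)) := by
        gcongr
        exact integral_abs_mul_le_sqrt_mul_sqrt hvl hwl
    _ = _ := by ring
end

section
/- Under the hypotheses of the abstract convergence theorem — a_h symmetric with a_h(v_h,v_h) ≥ α_*|v_h^ℓ|²_{H¹(Γ)}, polynomial consistency |a_{h,E}(p, v) − a_{Ẽ}(p^ℓ, v^ℓ)| ≤ C h² |p^ℓ|_{H¹(Ẽ)} |v^ℓ|_{H¹(Ẽ)} for linear polynomials p, and functionals F, F_h with |F(v_h^ℓ) − F_h(v_h)| ≤ 𝓕_h |v_h^ℓ|_{H¹(Γ)} — if u solves a(u,v) = F(v) on H¹₀(Γ) and u_h solves a_h(u_h, v_h) = F_h(v_h) on W_h¹, then for h sufficiently small: |u − u_h^ℓ|_{H¹(Γ)} ≤ C(|u − u_π^ℓ|_{h,1} + |u − u_I^ℓ|_{H¹(Γ)} + 𝓕_h + h‖F‖_{L²(Γ)'}), where u_I ∈ W_h¹ is any interpolant and u_π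 any piecewise-linear projection of u. -/
open Finset

/-- Cauchy–Schwarz for a symmetric positive-semidefinite bilinear form. -/
lemma bilin_cauchy_schwarz {M : Type} [AddCommGroup M] [Module ℝ M]
    (B : M →ₗ[ℝ] M →ₗ[ℝ] ℝ) (symm : ∀ v w, B v w = B w v)
    (nonneg : ∀ v, 0 ≤ B v v) (v w : M) :
    (B v w) ^ 2 ≤ B v v * B w w := by
  have key : ∀ t : ℝ, 0 ≤ (B w w) * (t * t) + (2 * B v w) * t + B v v := by
    intro t
    have h0 := nonneg (v + t • w)
    simp only [map_add, map_smul, LinearMap.add_apply, LinearMap.smul_apply,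
      smul_eq_mul] at h0
    rw [symm w v] at h0
    nlinarith [h0]
  have hd := discrim_le_zero key
  rw [discrim] at hd
  nlinarith [hd]

set_option maxHeartbeats 1000000 in
/-- Abstract convergence theorem (Theorem 6.1), in an abstract setting. `Hc` models
the broken Sobolev space `∏_E H¹(Ẽ)` over the curved elements `e : ι`, with local
`H¹(Ẽ)` seminorms `H1E` and (broken) global seminorm `H1 v = √(Σ_e H1E(e,v)²)`;
`H10` models `H¹₀(Γ)`; `Wh` models the broken discrete space with conforming
zero-mean virtual subspace `Wmem` and lift `L`. Under symmetry and two-sided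
stability of `a_h`, elementwise polynomial consistency with constant `Cc·h²`,
Cauchy–Schwarz for `a`, the seminorm properties, the load consistency bound `𝓕h`,
and the stability bound `H1 u ≤ C₀·‖F‖`, for `h` sufficiently small:
`|u − u_h^ℓ|_{H¹(Γ)} ≤ C'(|u − u_π^ℓ|_{h,1} + |u − u_I^ℓ|_{H¹(Γ)} + 𝓕h + h‖F‖)`. -/
theorem abstract_convergence
    (αs αb Cc C₀ : ℝ) (hαs : 0 < αs) (hαb : αs ≤ αb) (hCc : 0 < Cc) (hC₀ : 0 < C₀) :
    ∃ h₀ > (0:ℝ), ∃ C' > (0:ℝ), ∀ h : ℝ, 0 < h → h < h₀ →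
      ∀ (Hc Wh : Type) [AddCommGroup Hc] [Module ℝ Hc]
        [AddCommGroup Wh] [Module ℝ Wh]
        (ι : Type) [Fintype ι],
      ∀ (a : Hc →ₗ[ℝ] Hc →ₗ[ℝ] ℝ) (F : Hc →ₗ[ℝ] ℝ)
        (ah : Wh →ₗ[ℝ] Wh →ₗ[ℝ] ℝ) (Fh : Wh →ₗ[ℝ] ℝ)
        (L : Wh →ₗ[ℝ] Hc)
        (H1E : ι → Hc → ℝ) (H1 : Hc → ℝ)
        (H10 : Submodule ℝ Hc) (Wmem : Submodule ℝ Wh)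
        (ahE : ι → Wh → Wh → ℝ) (aE : ι → Hc → Hc → ℝ)
        (isPoly : ι → Wh → Prop)
        (Fnorm 𝓕h : ℝ)
        (u : Hc) (uh uI uπ : Wh),
      -- the broken H¹ seminorm
      (∀ v : Hc, H1 v = Real.sqrt (∑ e, (H1E e v) ^ 2)) →
      (∀ e (v : Hc), 0 ≤ H1E e v) →
      (∀ (v w : Hc), H1 (v + w) ≤ H1 v + H1 w) →
      (∀ v : Hc, H1 (-v) = H1 v) →
      -- decompositions of the forms over elements
      (∀ v w : Wh, ah v w = ∑ e, ahE e v w) →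
      (∀ v w : Hc, a v w = ∑ e, aE e v w) →
      -- symmetry of a_h
      (∀ v w : Wh, ah v w = ah w v) →
      -- two-sided stability: α_* |v^ℓ|² ≤ a_h(v,v) ≤ α^* |v^ℓ|²
      (∀ v : Wh, αs * (H1 (L v)) ^ 2 ≤ ah v v ∧ ah v v ≤ αb * (H1 (L v)) ^ 2) →
      -- elementwise polynomial consistency
      (∀ e (p v : Wh), isPoly e p →
        |ahE e p v - aE e (L p) (L v)| ≤ Cc * h ^ 2 * H1E e (L p) * H1E e (L v)) →
      -- Cauchy–Schwarz for the continuous form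
      (∀ v w : Hc, |a v w| ≤ H1 v * H1 w) →
      -- the lift maps the conforming discrete space into H¹₀(Γ)
      (∀ v ∈ Wmem, L v ∈ H10) →
      -- continuous and discrete problems
      u ∈ H10 → (∀ v ∈ H10, a u v = F v) →
      uh ∈ Wmem → (∀ v ∈ Wmem, ah uh v = Fh v) →
      -- interpolant and piecewise-linear projection of u
      uI ∈ Wmem → (∀ e, isPoly e uπ) →
      -- load consistency and stability of the continuous solution
      (0 ≤ 𝓕h) → (∀ v ∈ Wmem, |F (L v) - Fh v| ≤ 𝓕h * H1 (L v)) →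
      (0 ≤ Fnorm) → H1 u ≤ C₀ * Fnorm →
      H1 (u - L uh) ≤
        C' * (H1 (u - L uπ) + H1 (u - L uI) + 𝓕h + h * Fnorm) := by
  have hαbnn : (0:ℝ) ≤ αb := le_trans hαs.le hαb
  refine ⟨1, one_pos, 1 + (1 + Cc + αb + Cc * C₀) / αs, ?_, ?_⟩
  · have h1 : (0:ℝ) < 1 + Cc + αb + Cc * C₀ := by positivity
    have h2 : (0:ℝ) < (1 + Cc + αb + Cc * C₀) / αs := div_pos h1 hαs
    linarith
  intro h hh hh1 Hc Wh _ _ _ _ ι _ a F ah Fh L H1E H1 H10 Wmem ahE aE isPoly Fnorm 𝓕h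
    u uh uI uπ hH1def hH1Enn hH1tri hH1neg hahdec hadec hahsymm hstab hcons haCS hlift
    huH10 hcont huh hdisc huI hpoly h𝓕nn hload hFnn hustab
  -- basic facts about the seminorm
  have hH1nn : ∀ v : Hc, 0 ≤ H1 v := fun v => by rw [hH1def]; exact Real.sqrt_nonneg _
  have hH1sq : ∀ v : Hc, H1 v ^ 2 = ∑ e, (H1E e v) ^ 2 := fun v => by
    rw [hH1def]
    exact Real.sq_sqrt (Finset.sum_nonneg fun e _ => sq_nonneg _)
  have hδmem : uI - uh ∈ Wmem := Wmem.sub_mem huI huh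
  have hDnn : 0 ≤ H1 (L (uI - uh)) := hH1nn _
  have hXnn : 0 ≤ H1 (u - L uπ) := hH1nn _
  have hYnn : 0 ≤ H1 (u - L uI) := hH1nn _
  -- nonnegativity of ah on the diagonal
  have hahnn : ∀ v : Wh, 0 ≤ ah v v := fun v =>
    le_trans (by positivity) (hstab v).1
  -- step 1: coercivity
  have step1 : αs * (H1 (L (uI - uh))) ^ 2 ≤ ah (uI - uh) (uI - uh) := (hstab _).1
  -- step 2
  have step2 : ah (uI - uh) (uI - uh) =
      ah uπ (uI - uh) + ah (uI - uπ) (uI - uh) - Fh (uI - uh) := by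
    have h1 : ah uh (uI - uh) = Fh (uI - uh) := hdisc _ hδmem
    have h2 : ah (uI - uh) (uI - uh) = ah uI (uI - uh) - ah uh (uI - uh) := by
      rw [map_sub ah uI uh, LinearMap.sub_apply]
    have h3 : ah (uI - uπ) (uI - uh) = ah uI (uI - uh) - ah uπ (uI - uh) := by
      rw [map_sub ah uI uπ, LinearMap.sub_apply]
    rw [h2, h3, h1]; ring
  -- step 3: consistency bound for ah uπ (uI - uh)
  have hSnn : 0 ≤ ∑ e, H1E e (L uπ) * H1E e (L (uI - uh)) :=
    Finset.sum_nonneg fun e _ => mul_nonneg (hH1Enn _ _) (hH1Enn _ _)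
  have hCSsum : ∑ e, H1E e (L uπ) * H1E e (L (uI - uh)) ≤
      H1 (L uπ) * H1 (L (uI - uh)) := by
    have h1 := Finset.sum_mul_sq_le_sq_mul_sq Finset.univ
      (fun e => H1E e (L uπ)) (fun e => H1E e (L (uI - uh)))
    have h2 : (∑ e, H1E e (L uπ) * H1E e (L (uI - uh))) ^ 2 ≤
        (H1 (L uπ) * H1 (L (uI - uh))) ^ 2 := by
      rw [mul_pow, hH1sq, hH1sq]; exact h1
    calc ∑ e, H1E e (L uπ) * H1E e (L (uI - uh))
        = Real.sqrt ((∑ e, H1E e (L uπ) * H1E e (L (uI - uh))) ^ 2) :=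
          (Real.sqrt_sq hSnn).symm
      _ ≤ Real.sqrt ((H1 (L uπ) * H1 (L (uI - uh))) ^ 2) := Real.sqrt_le_sqrt h2
      _ = H1 (L uπ) * H1 (L (uI - uh)) :=
          Real.sqrt_sq (mul_nonneg (hH1nn _) hDnn)
  have step3 : ah uπ (uI - uh) ≤ a (L uπ) (L (uI - uh)) +
      Cc * h ^ 2 * (H1 (L uπ) * H1 (L (uI - uh))) := by
    have h3 : ∀ e ∈ Finset.univ (α := ι), ahE e uπ (uI - uh) ≤
        aE e (L uπ) (L (uI - uh)) +
          Cc * h ^ 2 * H1E e (L uπ) * H1E e (L (uI - uh)) := by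
      intro e _
      have := (abs_le.mp (hcons e uπ (uI - uh) (hpoly e))).2
      linarith
    have h4 := Finset.sum_le_sum h3
    have h5 : ∑ e, (aE e (L uπ) (L (uI - uh)) +
        Cc * h ^ 2 * H1E e (L uπ) * H1E e (L (uI - uh))) =
        (∑ e, aE e (L uπ) (L (uI - uh))) +
          Cc * h ^ 2 * ∑ e, H1E e (L uπ) * H1E e (L (uI - uh)) := by
      rw [Finset.sum_add_distrib, Finset.mul_sum]
      congr 1
      exact Finset.sum_congr rfl fun e _ => by ring
    have h6 : Cc * h ^ 2 * (∑ e, H1E e (L uπ) * H1E e (L (uI - uh))) ≤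
        Cc * h ^ 2 * (H1 (L uπ) * H1 (L (uI - uh))) :=
      mul_le_mul_of_nonneg_left hCSsum (by positivity)
    rw [hahdec, hadec]
    rw [h5] at h4
    linarith
  -- step 4: use the continuous problem
  have hLδH10 : L (uI - uh) ∈ H10 := hlift _ hδmem
  have step4 : a (L uπ) (L (uI - uh)) ≤
      H1 (u - L uπ) * H1 (L (uI - uh)) + Fh (uI - uh) + 𝓕h * H1 (L (uI - uh)) := by
    have h1 : a (L uπ) (L (uI - uh)) =
        a (L uπ - u) (L (uI - uh)) + a u (L (uI - uh)) := by
      rw [map_sub a (L uπ) u, LinearMap.sub_apply]; ring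
    have h2 : a u (L (uI - uh)) = F (L (uI - uh)) := hcont _ hLδH10
    have hneg : H1 (L uπ - u) = H1 (u - L uπ) := by
      rw [show (L uπ - u : Hc) = -(u - L uπ) by abel, hH1neg]
    have h3 := (abs_le.mp (haCS (L uπ - u) (L (uI - uh)))).2
    rw [hneg] at h3
    have h4 := (abs_le.mp (hload _ hδmem)).2
    linarith
  -- step 5: Cauchy–Schwarz for the nonconforming part
  have hLsub : H1 (L (uI - uπ)) ≤ H1 (u - L uπ) + H1 (u - L uI) := by
    have heq : (u - L uπ) + -(u - L uI) = L uI - L uπ := by abel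
    have htr := hH1tri (u - L uπ) (-(u - L uI))
    rw [heq, hH1neg] at htr
    rw [map_sub]
    exact htr
  have step5 : ah (uI - uπ) (uI - uh) ≤
      αb * (H1 (u - L uπ) + H1 (u - L uI)) * H1 (L (uI - uh)) := by
    have hcs := bilin_cauchy_schwarz ah hahsymm hahnn (uI - uπ) (uI - uh)
    have h1 : ah (uI - uπ) (uI - uπ) ≤ αb * (H1 (u - L uπ) + H1 (u - L uI)) ^ 2 := by
      have hs := (hstab (uI - uπ)).2
      have hb : αb * (H1 (L (uI - uπ))) ^ 2 ≤
          αb * (H1 (u - L uπ) + H1 (u - L uI)) ^ 2 :=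
        mul_le_mul_of_nonneg_left
          (pow_le_pow_left₀ (hH1nn _) hLsub 2) hαbnn
      linarith
    have h2 : ah (uI - uh) (uI - uh) ≤ αb * (H1 (L (uI - uh))) ^ 2 := (hstab _).2
    have hrnn : 0 ≤ αb * (H1 (u - L uπ) + H1 (u - L uI)) * H1 (L (uI - uh)) :=
      mul_nonneg (mul_nonneg hαbnn (add_nonneg hXnn hYnn)) hDnn
    have hprod : ah (uI - uπ) (uI - uπ) * ah (uI - uh) (uI - uh) ≤
        (αb * (H1 (u - L uπ) + H1 (u - L uI)) ^ 2) * (αb * (H1 (L (uI - uh))) ^ 2) :=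
      mul_le_mul h1 h2 (hahnn _) (by positivity)
    have hsq : (ah (uI - uπ) (uI - uh)) ^ 2 ≤
        (αb * (H1 (u - L uπ) + H1 (u - L uI)) * H1 (L (uI - uh))) ^ 2 := by
      calc (ah (uI - uπ) (uI - uh)) ^ 2 ≤
          ah (uI - uπ) (uI - uπ) * ah (uI - uh) (uI - uh) := hcs
        _ ≤ (αb * (H1 (u - L uπ) + H1 (u - L uI)) ^ 2) *
            (αb * (H1 (L (uI - uh))) ^ 2) := hprod
        _ = (αb * (H1 (u - L uπ) + H1 (u - L uI)) * H1 (L (uI - uh))) ^ 2 := by ring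
    calc ah (uI - uπ) (uI - uh) ≤ |ah (uI - uπ) (uI - uh)| := le_abs_self _
      _ = Real.sqrt ((ah (uI - uπ) (uI - uh)) ^ 2) := (Real.sqrt_sq_eq_abs _).symm
      _ ≤ Real.sqrt ((αb * (H1 (u - L uπ) + H1 (u - L uI)) * H1 (L (uI - uh))) ^ 2) :=
          Real.sqrt_le_sqrt hsq
      _ = αb * (H1 (u - L uπ) + H1 (u - L uI)) * H1 (L (uI - uh)) := Real.sqrt_sq hrnn
  -- bound on H1 (L uπ)
  have huπbd : H1 (L uπ) ≤ H1 (u - L uπ) + C₀ * Fnorm := by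
    have heq : -(u - L uπ) + u = L uπ := by abel
    have htr := hH1tri (-(u - L uπ)) u
    rw [heq, hH1neg] at htr
    linarith
  -- combine
  have hh2le1 : h ^ 2 ≤ 1 := by nlinarith
  have hh2leh : h ^ 2 ≤ h := by nlinarith
  have hc1 : Cc * h ^ 2 * (H1 (L uπ) * H1 (L (uI - uh))) ≤
      (Cc * H1 (u - L uπ) + Cc * C₀ * (h * Fnorm)) * H1 (L (uI - uh)) := by
    have h1 : Cc * h ^ 2 * H1 (L uπ) ≤ Cc * H1 (u - L uπ) + Cc * C₀ * (h * Fnorm) := by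
      have huπnn := hH1nn (L uπ)
      nlinarith [mul_nonneg (mul_nonneg hCc.le hXnn) (by linarith : (0:ℝ) ≤ 1 - h ^ 2),
        mul_nonneg (mul_nonneg (mul_nonneg hCc.le hC₀.le) hFnn)
          (by linarith : (0:ℝ) ≤ h - h ^ 2),
        mul_le_mul_of_nonneg_left huπbd (by positivity : (0:ℝ) ≤ Cc * h ^ 2)]
    calc Cc * h ^ 2 * (H1 (L uπ) * H1 (L (uI - uh)))
        = (Cc * h ^ 2 * H1 (L uπ)) * H1 (L (uI - uh)) := by ring
      _ ≤ (Cc * H1 (u - L uπ) + Cc * C₀ * (h * Fnorm)) * H1 (L (uI - uh)) :=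
          mul_le_mul_of_nonneg_right h1 hDnn
  have hKey : αs * (H1 (L (uI - uh))) ^ 2 ≤
      ((1 + Cc + αb) * H1 (u - L uπ) + αb * H1 (u - L uI) + 𝓕h +
        Cc * C₀ * (h * Fnorm)) * H1 (L (uI - uh)) := by
    linarith [step1, step2.le, step2.ge, step3, step4, step5, hc1]
  have hWnn : 0 ≤ h * Fnorm := mul_nonneg hh.le hFnn
  have hKnn : 0 ≤ (1 + Cc + αb) * H1 (u - L uπ) + αb * H1 (u - L uI) + 𝓕h +
      Cc * C₀ * (h * Fnorm) := by positivity
  have hDK : αs * H1 (L (uI - uh)) ≤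
      (1 + Cc + αb) * H1 (u - L uπ) + αb * H1 (u - L uI) + 𝓕h +
        Cc * C₀ * (h * Fnorm) := by
    rcases eq_or_lt_of_le hDnn with hD0 | hDpos
    · rw [← hD0]; simpa using hKnn
    · have hm : αs * H1 (L (uI - uh)) * H1 (L (uI - uh)) ≤
          ((1 + Cc + αb) * H1 (u - L uπ) + αb * H1 (u - L uI) + 𝓕h +
            Cc * C₀ * (h * Fnorm)) * H1 (L (uI - uh)) := by nlinarith [hKey]
      exact le_of_mul_le_mul_right hm hDpos
  -- final triangle inequality
  have hfin : H1 (u - L uh) ≤ H1 (u - L uI) + H1 (L (uI - uh)) := by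
    have heq : (u - L uI) + (L uI - L uh) = u - L uh := by abel
    have htr := hH1tri (u - L uI) (L uI - L uh)
    rw [heq] at htr
    rw [map_sub]
    exact htr
  have hgoal : αs * H1 (u - L uh) ≤
      (αs + (1 + Cc + αb + Cc * C₀)) *
        (H1 (u - L uπ) + H1 (u - L uI) + 𝓕h + h * Fnorm) := by
    have h1 : αs * H1 (u - L uh) ≤
        αs * H1 (u - L uI) + ((1 + Cc + αb) * H1 (u - L uπ) + αb * H1 (u - L uI) + 𝓕h +
          Cc * C₀ * (h * Fnorm)) := by
      linarith [mul_le_mul_of_nonneg_left hfin hαs.le, hDK]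
    nlinarith [h1, mul_nonneg hαs.le hXnn, mul_nonneg hαs.le h𝓕nn,
      mul_nonneg hαs.le hWnn,
      mul_nonneg (mul_nonneg hCc.le hC₀.le) hXnn,
      mul_nonneg (mul_nonneg hCc.le hC₀.le) hYnn,
      mul_nonneg (mul_nonneg hCc.le hC₀.le) h𝓕nn,
      mul_nonneg hCc.le hYnn, mul_nonneg hCc.le h𝓕nn, mul_nonneg hCc.le hWnn,
      mul_nonneg hαbnn h𝓕nn, mul_nonneg hαbnn hWnn, mul_nonneg hαbnn hXnn,
      hXnn, hYnn, h𝓕nn, hWnn]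
  have hfinal : H1 (u - L uh) ≤
      (αs + (1 + Cc + αb + Cc * C₀)) / αs *
        (H1 (u - L uπ) + H1 (u - L uI) + 𝓕h + h * Fnorm) := by
    rw [div_mul_eq_mul_div, le_div_iff₀ hαs]
    nlinarith [hgoal]
  have hCeq : (αs + (1 + Cc + αb + Cc * C₀)) / αs =
      1 + (1 + Cc + αb + Cc * C₀) / αs := by
    field_simp
  rw [← hCeq]
  exact hfinal
end

section
/- Suppose the flat interpolation estimate holds on each element E: for w ∈ H²(E), the virtual interpolant w_I ∈ V_h¹(E) satisfies ‖w − w_I‖_{L²(E)} + h|w − w_I|_{H¹(E)} ≤ C h_E²|w|_{H²(E)}, and suppose the norm/seminorm equivalences of Lemma 5.4 hold between each E and its lifted curved element Ẽ. Then for every v ∈ H²(Γ), the lifted interpolant v_I^ℓ satisfies ‖v − v_I^ℓ‖_{L²(Γ)} + h|v − v_I^ℓ|_{H¹(Γ)} ≤ C h²(|v|_{H²(Γ)} + h|v|_{H¹(Γ)}). -/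
open Finset

/-!
On each element the lifted interpolation error is controlled, through the norm equivalences,
by the flat error of the unlift `v ∘ a`; the flat estimate bounds that by `hE² |v ∘ a|_{H²}`,
and (5.7) turns this into `|v|_{H²} + hE |v|_{H¹}` on the curved element. Summing the squares
over the elements, Minkowski's inequality in `ℓ²` splits the right-hand side into the two
global seminorms.
-/

section SqrtSumSq

variable {ι : Type*} [Fintype ι]

theorem sqrt_sum_sq_eq_norm_toLp (f : ι → ℝ) :
    √(∑ i, f i ^ 2) = ‖(WithLp.toLp 2 f : EuclideanSpace ℝ ι)‖ := by
  simp [EuclideanSpace.norm_eq]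

theorem sqrt_sum_sq_add_le (f g : ι → ℝ) :
    √(∑ i, (f i + g i) ^ 2) ≤ √(∑ i, f i ^ 2) + √(∑ i, g i ^ 2) := by
  rw [sqrt_sum_sq_eq_norm_toLp f, sqrt_sum_sq_eq_norm_toLp g]
  exact (sqrt_sum_sq_eq_norm_toLp (f + g)).trans_le (norm_add_le _ _)

theorem sqrt_sum_sq_le_of_le {f g : ι → ℝ} (hf : ∀ i, 0 ≤ f i) (hfg : ∀ i, f i ≤ g i) :
    √(∑ i, f i ^ 2) ≤ √(∑ i, g i ^ 2) :=
  Real.sqrt_le_sqrt <| sum_le_sum fun i _ => pow_le_pow_left₀ (hf i) (hfg i) 2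

theorem sqrt_sum_sq_const_mul {c : ℝ} (hc : 0 ≤ c) (f : ι → ℝ) :
    √(∑ i, (c * f i) ^ 2) = c * √(∑ i, f i ^ 2) := by
  simp_rw [mul_pow, ← mul_sum, Real.sqrt_mul (sq_nonneg c), Real.sqrt_sq hc]

theorem sqrt_sum_sq_add_sqrt_sum_sq_le {x y p q : ι → ℝ} {K h : ℝ} (hK : 0 ≤ K) (hh : 0 ≤ h)
    (hx : ∀ i, 0 ≤ x i) (hy : ∀ i, 0 ≤ y i) (hxy : ∀ i, x i + y i ≤ K * (p i + h * q i)) :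
    √(∑ i, x i ^ 2) + √(∑ i, y i ^ 2) ≤ 2 * K * (√(∑ i, p i ^ 2) + h * √(∑ i, q i ^ 2)) := by
  have hsum : √(∑ i, (x i + y i) ^ 2) ≤ K * (√(∑ i, p i ^ 2) + h * √(∑ i, q i ^ 2)) :=
    calc √(∑ i, (x i + y i) ^ 2) ≤ √(∑ i, (K * (p i + h * q i)) ^ 2) :=
          sqrt_sum_sq_le_of_le (fun i => add_nonneg (hx i) (hy i)) hxy
      _ = K * √(∑ i, (p i + h * q i) ^ 2) := sqrt_sum_sq_const_mul hK _
      _ ≤ K * (√(∑ i, p i ^ 2) + h * √(∑ i, q i ^ 2)) := by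
          grw [sqrt_sum_sq_add_le, sqrt_sum_sq_const_mul hh]
  have hxle := sqrt_sum_sq_le_of_le hx fun i => le_add_of_nonneg_right (hy i)
  have hyle := sqrt_sum_sq_le_of_le hy fun i => le_add_of_nonneg_left (hx i)
  linarith

end SqrtSumSq

theorem lifted_interpolation_error_le_on_element {Γ Γh : Type*} (a : Γh ≃ Γ)
    {L2h H1h H2h : (Γh → ℝ) → ℝ} {L2c H1c H2c : (Γ → ℝ) → ℝ} {Ih : (Γh → ℝ) → (Γh → ℝ)}
    {C Ci h hE : ℝ} {v : Γ → ℝ} (hC : 0 ≤ C) (hCi : 0 ≤ Ci) (hh : 0 ≤ h) (hE0 : 0 ≤ hE)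
    (hEh : hE ≤ h) (hH1v : 0 ≤ H1c v) (hH2v : 0 ≤ H2c v)
    (hflat : ∀ w, L2h (w - Ih w) + h * H1h (w - Ih w) ≤ Ci * hE ^ 2 * H2h w)
    (hL2 : ∀ w, L2c (fun y => w (a.symm y)) ≤ C * L2h w)
    (hH1 : ∀ w, H1c (fun y => w (a.symm y)) ≤ C * H1h w)
    (hH2 : H2h (fun x => v (a x)) ≤ C * (H2c v + hE * H1c v)) :
    L2c (fun y => v y - Ih (fun x => v (a x)) (a.symm y)) +
        h * H1c (fun y => v y - Ih (fun x => v (a x)) (a.symm y)) ≤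
      C ^ 2 * Ci * h ^ 2 * (H2c v + h * H1c v) := by
  set w : Γh → ℝ := fun x => v (a x)
  have hlift : (fun y => v y - Ih w (a.symm y)) = fun y => (w - Ih w) (a.symm y) := by
    simp [w]
  rw [hlift]
  calc L2c (fun y => (w - Ih w) (a.symm y)) + h * H1c (fun y => (w - Ih w) (a.symm y))
      ≤ C * (L2h (w - Ih w) + h * H1h (w - Ih w)) := by
        grw [hL2, hH1]; linarith
    _ ≤ C * (Ci * hE ^ 2 * (C * (H2c v + hE * H1c v))) := by grw [hflat, hH2]
    _ ≤ C * (Ci * h ^ 2 * (C * (H2c v + h * H1c v))) := by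
        have : 0 ≤ H2c v + h * H1c v := by positivity
        gcongr
    _ = C ^ 2 * Ci * h ^ 2 * (H2c v + h * H1c v) := by ring

/-- Interpolation part (5.8) of Theorem 5.6, in an abstract element-wise setting.
`Γ` is the surface, `Γh` the polygonal approximation with one-to-one normal
projection `a : Γh ≃ Γ`; mesh elements `ι` have diameters `hE e ≤ h`; `Ih` is the
virtual interpolation operator on `Γh` (applied to the unlift `v^{-ℓ} = v ∘ a`).
Assuming the flat interpolation estimate
`‖w − I_h w‖_{L²(E)} + h|w − I_h w|_{H¹(E)} ≤ C hE² |w|_{H²(E)}` on each element,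
the L² and H¹ norm equivalences under lifting with constant `C`, and the unlift
H² bound `H2h(v^{-ℓ}) ≤ C(H2c v + hE·H1c v)` of Lemma 5.4, for every
`v ∈ H²(Γ)` the lifted interpolant `v_I^ℓ` satisfies
`‖v − v_I^ℓ‖_{L²(Γ)} + h|v − v_I^ℓ|_{H¹(Γ)} ≤ C' h² (|v|_{H²(Γ)} + h|v|_{H¹(Γ)})`. -/
theorem lifted_interpolation_estimate
    (C Ci : ℝ) (hC : 0 < C) (hCi : 0 < Ci) :
    ∃ C' > (0:ℝ), ∀ h : ℝ, 0 < h →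
      ∀ (Γ Γh : Type) (a : Γh ≃ Γ) (ι : Type) [Fintype ι],
      ∀ (hE : ι → ℝ)
        (L2h H1h H2h : ι → (Γh → ℝ) → ℝ)
        (L2c H1c H2c : ι → (Γ → ℝ) → ℝ)
        (Ih : (Γh → ℝ) → (Γh → ℝ)),
      (∀ e, 0 < hE e ∧ hE e ≤ h) →
      -- seminorms are nonnegative
      (∀ e (w : Γh → ℝ), 0 ≤ L2h e w ∧ 0 ≤ H1h e w ∧ 0 ≤ H2h e w) →
      (∀ e (v : Γ → ℝ), 0 ≤ L2c e v ∧ 0 ≤ H1c e v ∧ 0 ≤ H2c e v) →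
      -- flat interpolation estimate on each element
      (∀ e (w : Γh → ℝ),
        L2h e (w - Ih w) + h * H1h e (w - Ih w) ≤ Ci * hE e ^ 2 * H2h e w) →
      -- L² norm equivalence under lifting
      (∀ e (w : Γh → ℝ),
        (1 / C) * L2h e w ≤ L2c e (fun y => w (a.symm y)) ∧
        L2c e (fun y => w (a.symm y)) ≤ C * L2h e w) →
      -- H¹ seminorm equivalence under lifting
      (∀ e (w : Γh → ℝ),
        (1 / C) * H1h e w ≤ H1c e (fun y => w (a.symm y)) ∧
        H1c e (fun y => w (a.symm y)) ≤ C * H1h e w) →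
      -- unlift H² bound (estimate (5.7) of Lemma 5.4)
      (∀ e (v : Γ → ℝ),
        H2h e (fun x => v (a x)) ≤ C * (H2c e v + hE e * H1c e v)) →
      ∀ v : Γ → ℝ,
        Real.sqrt (∑ e,
              (L2c e (fun y => v y - Ih (fun x => v (a x)) (a.symm y))) ^ 2) +
            h * Real.sqrt (∑ e,
              (H1c e (fun y => v y - Ih (fun x => v (a x)) (a.symm y))) ^ 2) ≤
          C' * h ^ 2 *
            (Real.sqrt (∑ e, (H2c e v) ^ 2) +
              h * Real.sqrt (∑ e, (H1c e v) ^ 2)) := by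
  refine ⟨2 * C ^ 2 * Ci, by positivity, ?_⟩
  intro h hh Γ Γh a ι _ hE L2h H1h H2h L2c H1c H2c Ih hmesh _ hnonneg hflat hL2 hH1 hH2 v
  have hlocal e := lifted_interpolation_error_le_on_element a hC.le hCi.le hh.le
    (hmesh e).1.le (hmesh e).2 (hnonneg e v).2.1 (hnonneg e v).2.2 (hflat e)
    (fun w => (hL2 e w).2) (fun w => (hH1 e w).2) (hH2 e v)
  rw [← sqrt_sum_sq_const_mul hh.le]
  calc _ ≤ 2 * (C ^ 2 * Ci * h ^ 2) * (√(∑ e, H2c e v ^ 2) + h * √(∑ e, H1c e v ^ 2)) :=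
        sqrt_sum_sq_add_sqrt_sum_sq_le (by positivity) hh.le (fun e => (hnonneg e _).1)
          (fun e => mul_nonneg hh.le (hnonneg e _).2.1) hlocal
    _ = _ := by ring
end
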